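/- arXiv:2007.12241 — 6 statements merged into one kernel-verified Lean document; each statement's English description precedes it below -/
import Mathlib

section
/- Let Y be a locally compact abelian group and f : Y → ℝ a continuous function which is a polynomial, i.e., Δ_h^{n+1} f(y) = 0 for some n and all y, h ∈ Y, where Δ_h f(y) = f(y+h) − f(y). Then f is constant on the subgroup b_Y of compact elements of Y. -/
/-! Along the orbit `m ↦ m • y` the polynomial `f` becomes a sequence `g : ℤ → ℝ` with
`Δ₁^[n+1] g = 0`, and it is bounded because `f` is continuous and the closure of the orbit is
compact. A bounded sequence with `Δ₁^[n+1] g = 0` is constant: by induction, `Δ₁ g` is constant,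
so `g` is affine in `m`, and a bounded affine sequence has slope zero. -/

/-- The finite difference operator `Δ_h f (y) = f (y + h) - f y`. -/
def finDiff {Y : Type*} [AddCommGroup Y] (h : Y) (f : Y → ℝ) : Y → ℝ :=
  fun y => f (y + h) - f y

open Bornology Set

section Pullback

variable {Z Y : Type*} [AddCommGroup Z] [AddCommGroup Y]

theorem finDiff_comp_addMonoidHom (φ : Z →+ Y) (h : Z) (f : Y → ℝ) :
    finDiff h (f ∘ φ) = finDiff (φ h) f ∘ φ := by
  funext z
  simp [finDiff, map_add]

theorem finDiff_iterate_comp_addMonoidHom (φ : Z →+ Y) (h : Z) (k : ℕ) (f : Y → ℝ) :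
    (finDiff h)^[k] (f ∘ φ) = (finDiff (φ h))^[k] f ∘ φ :=
  (Function.Semiconj.iterate_right (f := (· ∘ φ))
    (fun f => (finDiff_comp_addMonoidHom φ h f).symm) k f).symm

end Pullback

theorem isBounded_range_finDiff {Y : Type*} [AddCommGroup Y] {g : Y → ℝ}
    (hg : IsBounded (range g)) (h : Y) : IsBounded (range (finDiff h g)) :=
  (hg.sub hg).subset <| by
    rintro _ ⟨y, rfl⟩
    exact sub_mem_sub (mem_range_self _) (mem_range_self _)

theorem Int.eq_add_mul_of_finDiff_eq_const {g : ℤ → ℝ} {c : ℝ}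
    (hc : ∀ m, finDiff 1 g m = c) (m : ℤ) : g m = g 0 + m * c := by
  have step : ∀ k : ℤ, g (k + 1) = g k + c := fun k => by
    rw [← hc k, finDiff]
    ring
  induction m using Int.induction_on with
  | zero => simp
  | succ k ih => rw [step, ih]; push_cast; ring
  | pred k ih =>
    have := step (-k - 1)
    rw [sub_add_cancel, ih] at this
    push_cast at this ⊢
    linarith

theorem Int.slope_eq_zero_of_isBounded_range {a c : ℝ}
    (hb : IsBounded (Set.range fun m : ℤ => a + m * c)) : c = 0 := by
  obtain ⟨C, hC⟩ := isBounded_iff_forall_norm_le.1 hb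
  have hmul : ∀ m : ℤ, |(m : ℝ)| * |c| ≤ 2 * C := fun m => by
    have hm := hC _ (mem_range_self m)
    have h0 := hC _ (mem_range_self 0)
    simp only [Real.norm_eq_abs, Int.cast_zero, zero_mul, add_zero] at hm h0
    calc |(m : ℝ)| * |c| = |(a + m * c) - a| := by rw [add_sub_cancel_left, abs_mul]
      _ ≤ |a + m * c| + |a| := abs_sub _ _
      _ ≤ 2 * C := by linarith
  by_contra hne
  have hcpos : 0 < |c| := abs_pos.2 hne
  obtain ⟨N, hN⟩ := exists_nat_gt (2 * C / |c|)
  have := hmul N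
  rw [Int.cast_natCast, abs_of_nonneg (Nat.cast_nonneg N)] at this
  rw [div_lt_iff₀ hcpos] at hN
  linarith

theorem Int.eq_of_isBounded_range_of_finDiff_iterate_eq_zero (n : ℕ) {g : ℤ → ℝ}
    (hg : IsBounded (Set.range g)) (hD : (finDiff 1)^[n + 1] g = 0) (m : ℤ) : g m = g 0 := by
  induction n generalizing g m with
  | zero =>
    simpa using Int.eq_add_mul_of_finDiff_eq_const (c := 0) (fun k => congrFun hD k) m
  | succ n ih =>
    have hconst : ∀ k, finDiff 1 g k = finDiff 1 g 0 := fun k =>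
      ih (isBounded_range_finDiff hg 1) (by rwa [← Function.iterate_succ_apply]) k
    have haffine := Int.eq_add_mul_of_finDiff_eq_const hconst
    have hslope : finDiff 1 g 0 = 0 :=
      Int.slope_eq_zero_of_isBounded_range (by rwa [← funext haffine])
    simpa [hslope] using haffine m

theorem continuous_polynomial_const_on_compact_elements_general {Y : Type*} [AddCommGroup Y]
    [TopologicalSpace Y]
    (f : Y → ℝ) (hf : Continuous f)
    (hpoly : ∃ n : ℕ, ∀ y h : Y, (finDiff h)^[n + 1] f y = 0) :
    ∀ y : Y, IsCompact (closure (Set.range fun m : ℤ => m • y)) → f y = f 0 := by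
  obtain ⟨n, hn⟩ := hpoly
  intro y hK
  set φ := zmultiplesHom Y y
  have hbounded : IsBounded (range (f ∘ φ)) := by
    refine (hK.image hf).isBounded.subset ?_
    rw [range_comp]
    exact image_mono subset_closure
  have hD : (finDiff 1)^[n + 1] (f ∘ φ) = 0 := by
    rw [finDiff_iterate_comp_addMonoidHom]
    funext m
    exact hn _ _
  simpa [φ] using Int.eq_of_isBounded_range_of_finDiff_iterate_eq_zero n hbounded hD 1

/-- A continuous polynomial on a locally compact abelian group is
constant on the subgroup of compact elements. -/
theorem continuous_polynomial_const_on_compact_elements {Y : Type*} [AddCommGroup Y]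
    [TopologicalSpace Y] [IsTopologicalAddGroup Y] [LocallyCompactSpace Y]
    (f : Y → ℝ) (hf : Continuous f)
    (hpoly : ∃ n : ℕ, ∀ y h : Y, (finDiff h)^[n + 1] f y = 0) :
    ∀ y : Y, IsCompact (closure (Set.range fun m : ℤ => m • y)) → f y = f 0 :=
  continuous_polynomial_const_on_compact_elements_general f hf hpoly
end

section
/- Let X be a topological group, G a Borel subgroup of X, and μ a probability measure concentrated on G with μ = μ₁ * μ₂ for probability measures μ₁, μ₂ on X. Then there exist shifts μ′_j = μ_j * E_{x_j} (degenerate distributions at points x_j ∈ X) such that μ = μ′₁ * μ′₂ and both μ′₁, μ′₂ are concentrated on G. -/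
/-!
Since `μ(G) = 1` and `μ` is the image of `μ₁ ⊗ μ₂` under addition, `x + y ∈ G` for
`(μ₁ ⊗ μ₂)`-a.e. `(x, y)`. By Fubini there is a `c` with `x + c ∈ G` for `μ₁`-a.e. `x`, and then an
`x₀` with `x₀ + c ∈ G` and `x₀ + y ∈ G` for `μ₂`-a.e. `y`; hence `y - c = (x₀ + y) - (x₀ + c) ∈ G`
for `μ₂`-a.e. `y`, and the shifts by `c` and `-c` do the job.

Without second countability, addition `X × X → X` need not be measurable. It is a.e.-measurable
for `μ₁ ⊗ μ₂` because `μ ≠ 0`, and convolution with a Dirac mass is still a translation because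
Borel sets are unions of classes of topologically inseparable points.
-/

open MeasureTheory Measure

theorem aemeasurable_of_ae_inseparable {α X : Type*} [MeasurableSpace α] [TopologicalSpace X]
    [MeasurableSpace X] [BorelSpace X] {μ : Measure α} {f g : α → X} (hg : Measurable g)
    (h : ∀ᵐ a ∂μ, Inseparable (f a) (g a)) : AEMeasurable f μ := by
  classical
  refine ⟨fun a ↦ if Inseparable (f a) (g a) then f a else g a, fun s hs ↦ ?_,
    h.mono fun a ha ↦ (if_pos ha).symm⟩
  convert hg hs using 1
  ext a
  simp only [Set.mem_preimage]
  split_ifs with ha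
  exacts [ha.mem_measurableSet_iff hs, Iff.rfl]

theorem ae_ae_swap_of_ae_prod {α β : Type*} [MeasurableSpace α] [MeasurableSpace β]
    {μ : Measure α} {ν : Measure β} [SFinite μ] [SFinite ν] {p : α × β → Prop}
    (h : ∀ᵐ z ∂μ.prod ν, p z) : ∀ᵐ y ∂ν, ∀ᵐ x ∂μ, p (x, y) := by
  have hswap : ∀ᵐ z ∂ν.prod μ, p z.swap := by
    rw [← prod_swap]
    exact MeasurableEquiv.prodComm.measurableEmbedding.ae_map_iff.2 h
  exact ae_ae_of_ae_prod hswap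

theorem ae_prod_add_mem_of_ae_conv {X : Type*} [AddMonoid X] [MeasurableSpace X]
    {μ ν : Measure X} (hne : μ.conv ν ≠ 0) {s : Set X} (hs : MeasurableSet s)
    (h : ∀ᵐ x ∂μ.conv ν, x ∈ s) : ∀ᵐ z ∂μ.prod ν, z.1 + z.2 ∈ s := by
  have hadd : AEMeasurable (fun z : X × X ↦ z.1 + z.2) (μ.prod ν) := by
    by_contra hadd
    exact hne (map_of_not_aemeasurable hadd)
  exact (ae_map_iff hadd hs).1 h

theorem conv_map_add_right_map_add_right_neg {X : Type*} [AddCommGroup X] [MeasurableSpace X]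
    [MeasurableAdd X] (μ ν : Measure X) [SFinite μ] [SFinite ν] (a : X) :
    (μ.map (· + a)).conv (ν.map (· + -a)) = μ.conv ν := by
  let T : X × X ≃ᵐ X × X :=
    (MeasurableEquiv.addRight a).prodCongr (MeasurableEquiv.addRight (-a))
  have hT : (fun z : X × X ↦ z.1 + z.2) ∘ T = fun z ↦ z.1 + z.2 := by
    funext z
    show z.1 + a + (z.2 + -a) = z.1 + z.2
    abel
  rw [conv, conv, map_prod_map _ _ (measurable_add_const a) (measurable_add_const (-a))]
  change map _ (map T _) = _
  -- if addition is not a.e.-measurable, both sides are the junk value `0`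
  by_cases hadd : AEMeasurable (fun z : X × X ↦ z.1 + z.2) (μ.prod ν)
  · rw [AEMeasurable.map_map_of_aemeasurable _ T.measurable.aemeasurable, hT]
    rwa [aemeasurable_map_equiv_iff, hT]
  · rw [map_of_not_aemeasurable hadd, map_of_not_aemeasurable]
    rwa [aemeasurable_map_equiv_iff, hT]

section TopologicalAddGroup

variable {X : Type*} [TopologicalSpace X] [AddCommGroup X] [IsTopologicalAddGroup X]
  [MeasurableSpace X] [BorelSpace X]

theorem conv_dirac_eq_map (ν : Measure X) [SFinite ν] (d : X) :
    ν.conv (dirac d) = ν.map (· + d) := by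
  have hclosure : ∀ᵐ z ∂ν.map (·, d), z.2 ∈ closure {d} :=
    (ae_map_iff (by fun_prop) (isClosed_closure.measurableSet.preimage measurable_snd)).2
      (ae_of_all _ fun _ ↦ subset_closure rfl)
  have hadd : AEMeasurable (fun z : X × X ↦ z.1 + z.2) (ν.map (·, d)) :=
    aemeasurable_of_ae_inseparable (g := fun z ↦ z.1 + d) (by fun_prop) <|
      hclosure.mono fun z hz ↦ (Inseparable.refl z.1).add
        (specializes_iff_inseparable.1 (specializes_iff_mem_closure.2 hz)).symm
  rw [conv, prod_dirac, hadd.map_map_of_aemeasurable (by fun_prop)]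
  rfl

theorem conv_dirac_apply_eq_one_iff (ν : Measure X) [IsProbabilityMeasure ν] (d : X) {s : Set X}
    (hs : MeasurableSet s) : ν.conv (dirac d) s = 1 ↔ ∀ᵐ x ∂ν, x + d ∈ s := by
  rw [conv_dirac_eq_map, map_apply (measurable_add_const d) hs,
    ← mem_ae_iff_prob_eq_one (measurable_add_const d hs)]
  rfl

theorem conv_dirac_conv_conv_dirac_neg (μ ν : Measure X) [SFinite μ] [SFinite ν] (a : X) :
    (μ.conv (dirac a)).conv (ν.conv (dirac (-a))) = μ.conv ν := by
  rw [conv_dirac_eq_map, conv_dirac_eq_map, conv_map_add_right_map_add_right_neg]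

end TopologicalAddGroup

/-- If a probability measure `μ` concentrated on a Borel subgroup `G`
of a topological group `X` decomposes as a convolution `μ = μ₁ ∗ μ₂`, then `μ₁, μ₂` can
be replaced by shifts `μ'ⱼ = μⱼ ∗ E_{xⱼ}` so that `μ = μ'₁ ∗ μ'₂` and both `μ'ⱼ` are
concentrated on `G`. -/
theorem shift_factors_into_subgroup {X : Type*} [TopologicalSpace X] [AddCommGroup X]
    [IsTopologicalAddGroup X] [MeasurableSpace X] [BorelSpace X]
    (G : AddSubgroup X) (hGmeas : MeasurableSet (G : Set X))
    (μ μ₁ μ₂ : Measure X) [IsProbabilityMeasure μ]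
    [IsProbabilityMeasure μ₁] [IsProbabilityMeasure μ₂]
    (hconv : μ = μ₁.conv μ₂) (hsupp : μ (G : Set X) = 1) :
    ∃ x₁ x₂ : X,
      μ = (μ₁.conv (Measure.dirac x₁)).conv (μ₂.conv (Measure.dirac x₂)) ∧
      (μ₁.conv (Measure.dirac x₁)) (G : Set X) = 1 ∧
      (μ₂.conv (Measure.dirac x₂)) (G : Set X) = 1 := by
  subst hconv
  have hG : ∀ᵐ z ∂μ₁.prod μ₂, z.1 + z.2 ∈ G :=
    ae_prod_add_mem_of_ae_conv (IsProbabilityMeasure.ne_zero _) hGmeas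
      ((mem_ae_iff_prob_eq_one hGmeas).2 hsupp)
  obtain ⟨c, hc⟩ := (ae_ae_swap_of_ae_prod hG).exists
  obtain ⟨x₀, hx₀, hx₀c⟩ := ((ae_ae_of_ae_prod hG).and hc).exists
  refine ⟨c, -c, (conv_dirac_conv_conv_dirac_neg μ₁ μ₂ c).symm,
    (conv_dirac_apply_eq_one_iff μ₁ c hGmeas).2 hc,
    (conv_dirac_apply_eq_one_iff μ₂ (-c) hGmeas).2 ?_⟩
  filter_upwards [hx₀] with y hy
  rw [show y + -c = x₀ + y - (x₀ + c) by abel]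
  exact G.sub_mem hy hx₀c
end

section
/- Let Y be an abelian group, ε an automorphism of Y, and φ₁, φ₂ : Y → ℝ functions satisfying φ₁(u+v) + φ₂(u+εv) − φ₁(u−v) − φ₂(u−εv) = 0 for all u, v ∈ Y. Then for all y ∈ Y and all h₁ = (I+ε)k₁, h₂ = 2k₂, h₃ = (I−ε)k₃ with k₁, k₂, k₃ ∈ Y, one has Δ_{h₃}Δ_{h₂}Δ_{h₁}φ₁(y) = 0. -/
/-- If `φ₁, φ₂` satisfy the Heyde functional equation
`φ₁(u+v) + φ₂(u+εv) - φ₁(u-v) - φ₂(u-εv) = 0`, then for increments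
`h₁ = (I+ε)k₁`, `h₂ = 2k₂`, `h₃ = (I-ε)k₃` one has `Δ_{h₃}Δ_{h₂}Δ_{h₁} φ₁ = 0`. -/
theorem heyde_finite_difference_step {Y : Type*} [AddCommGroup Y]
    (ε : Y ≃+ Y) (φ₁ φ₂ : Y → ℝ)
    (heq : ∀ u v : Y, φ₁ (u + v) + φ₂ (u + ε v) - φ₁ (u - v) - φ₂ (u - ε v) = 0) :
    ∀ y k₁ k₂ k₃ : Y,
      finDiff (k₃ - ε k₃) (finDiff (2 • k₂) (finDiff (k₁ + ε k₁) φ₁)) y = 0 := by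
  intro y k₁ k₂ k₃
  simp only [finDiff]
  rw [show y + (k₃ - ε k₃) + 2 • k₂ + (k₁ + ε k₁) = y + k₁ + k₂ + k₂ + k₃ + ε k₁ - ε k₃ by abel,
      show y + (k₃ - ε k₃) + 2 • k₂ = y + k₂ + k₂ + k₃ - ε k₃ by abel,
      show y + (k₃ - ε k₃) + (k₁ + ε k₁) = y + k₁ + k₃ + ε k₁ - ε k₃ by abel,
      show y + (k₃ - ε k₃) = y + k₃ - ε k₃ by abel,
      show y + 2 • k₂ + (k₁ + ε k₁) = y + k₁ + k₂ + k₂ + ε k₁ by abel,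
      show y + 2 • k₂ = y + k₂ + k₂ by abel,
      show y + (k₁ + ε k₁) = y + k₁ + ε k₁ by abel]
  have h1 := heq (y + k₁ + k₂ + k₃ + ε k₁ - ε k₃) (k₂)
  rw [show y + k₁ + k₂ + k₃ + ε k₁ - ε k₃ + (k₂) = y + k₁ + k₂ + k₂ + k₃ + ε k₁ - ε k₃ by abel, show y + k₁ + k₂ + k₃ + ε k₁ - ε k₃ + (ε k₂) = y + k₁ + k₂ + k₃ + ε k₁ + ε k₂ - ε k₃ by abel, show y + k₁ + k₂ + k₃ + ε k₁ - ε k₃ - (k₂) = y + k₁ + k₃ + ε k₁ - ε k₃ by abel, show y + k₁ + k₂ + k₃ + ε k₁ - ε k₃ - (ε k₂) = y + k₁ + k₂ + k₃ + ε k₁ - ε k₂ - ε k₃ by abel] at h1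
  have h2 := heq (y + k₁ + k₂ + k₃ + ε k₂) (k₁ - k₃)
  simp only [map_add, map_sub, map_neg] at h2
  rw [show y + k₁ + k₂ + k₃ + ε k₂ + (k₁ - k₃) = y + k₁ + k₁ + k₂ + ε k₂ by abel, show y + k₁ + k₂ + k₃ + ε k₂ + (ε k₁ - ε k₃) = y + k₁ + k₂ + k₃ + ε k₁ + ε k₂ - ε k₃ by abel, show y + k₁ + k₂ + k₃ + ε k₂ - (k₁ - k₃) = y + k₂ + k₃ + k₃ + ε k₂ by abel, show y + k₁ + k₂ + k₃ + ε k₂ - (ε k₁ - ε k₃) = y + k₁ + k₂ + k₃ - ε k₁ + ε k₂ + ε k₃ by abel] at h2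
  have h3 := heq (y + k₁ + k₂ + k₃) (k₁ - k₂ - k₃)
  simp only [map_add, map_sub, map_neg] at h3
  rw [show y + k₁ + k₂ + k₃ + (k₁ - k₂ - k₃) = y + k₁ + k₁ by abel, show y + k₁ + k₂ + k₃ + (ε k₁ - ε k₂ - ε k₃) = y + k₁ + k₂ + k₃ + ε k₁ - ε k₂ - ε k₃ by abel, show y + k₁ + k₂ + k₃ - (k₁ - k₂ - k₃) = y + k₂ + k₂ + k₃ + k₃ by abel, show y + k₁ + k₂ + k₃ - (ε k₁ - ε k₂ - ε k₃) = y + k₁ + k₂ + k₃ - ε k₁ + ε k₂ + ε k₃ by abel] at h3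
  have h4 := heq (y + k₂ + k₃ - ε k₃) (k₂)
  rw [show y + k₂ + k₃ - ε k₃ + (k₂) = y + k₂ + k₂ + k₃ - ε k₃ by abel, show y + k₂ + k₃ - ε k₃ + (ε k₂) = y + k₂ + k₃ + ε k₂ - ε k₃ by abel, show y + k₂ + k₃ - ε k₃ - (k₂) = y + k₃ - ε k₃ by abel, show y + k₂ + k₃ - ε k₃ - (ε k₂) = y + k₂ + k₃ - ε k₂ - ε k₃ by abel] at h4
  have h5 := heq (y + k₂ + k₃ + ε k₂) (k₃)
  rw [show y + k₂ + k₃ + ε k₂ + (k₃) = y + k₂ + k₃ + k₃ + ε k₂ by abel, show y + k₂ + k₃ + ε k₂ + (ε k₃) = y + k₂ + k₃ + ε k₂ + ε k₃ by abel, show y + k₂ + k₃ + ε k₂ - (k₃) = y + k₂ + ε k₂ by abel, show y + k₂ + k₃ + ε k₂ - (ε k₃) = y + k₂ + k₃ + ε k₂ - ε k₃ by abel] at h5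
  have h6 := heq (y + k₂ + k₃) (k₂ + k₃)
  simp only [map_add, map_sub, map_neg] at h6
  rw [show y + k₂ + k₃ + (k₂ + k₃) = y + k₂ + k₂ + k₃ + k₃ by abel, show y + k₂ + k₃ + (ε k₂ + ε k₃) = y + k₂ + k₃ + ε k₂ + ε k₃ by abel, show y + k₂ + k₃ - (k₂ + k₃) = y by abel, show y + k₂ + k₃ - (ε k₂ + ε k₃) = y + k₂ + k₃ - ε k₂ - ε k₃ by abel] at h6
  have h7 := heq (y + k₁ + k₂ + ε k₁) (k₂)
  rw [show y + k₁ + k₂ + ε k₁ + (k₂) = y + k₁ + k₂ + k₂ + ε k₁ by abel, show y + k₁ + k₂ + ε k₁ + (ε k₂) = y + k₁ + k₂ + ε k₁ + ε k₂ by abel, show y + k₁ + k₂ + ε k₁ - (k₂) = y + k₁ + ε k₁ by abel, show y + k₁ + k₂ + ε k₁ - (ε k₂) = y + k₁ + k₂ + ε k₁ - ε k₂ by abel] at h7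
  have h8 := heq (y + k₁ + k₂ + ε k₂) (k₁)
  rw [show y + k₁ + k₂ + ε k₂ + (k₁) = y + k₁ + k₁ + k₂ + ε k₂ by abel, show y + k₁ + k₂ + ε k₂ + (ε k₁) = y + k₁ + k₂ + ε k₁ + ε k₂ by abel, show y + k₁ + k₂ + ε k₂ - (k₁) = y + k₂ + ε k₂ by abel, show y + k₁ + k₂ + ε k₂ - (ε k₁) = y + k₁ + k₂ - ε k₁ + ε k₂ by abel] at h8
  have h9 := heq (y + k₁ + k₂) (k₁ - k₂)
  simp only [map_add, map_sub, map_neg] at h9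
  rw [show y + k₁ + k₂ + (k₁ - k₂) = y + k₁ + k₁ by abel, show y + k₁ + k₂ + (ε k₁ - ε k₂) = y + k₁ + k₂ + ε k₁ - ε k₂ by abel, show y + k₁ + k₂ - (k₁ - k₂) = y + k₂ + k₂ by abel, show y + k₁ + k₂ - (ε k₁ - ε k₂) = y + k₁ + k₂ - ε k₁ + ε k₂ by abel] at h9
  linarith [h1, h2, h3, h4, h5, h6, h7, h8, h9]
end

section
/- Let Y be an abelian group, ε an automorphism of Y such that (I+ε)Y = (I−ε)Y = 2Y = Y, and φ₁, φ₂ : Y → ℝ satisfying φ₁(u+v) + φ₂(u+εv) − φ₁(u−v) − φ₂(u−εv) = 0 for all u, v ∈ Y. Then Δ_h³ φ₁(y) = 0 for all h, y ∈ Y, i.e., φ₁ is a polynomial of degree at most 2 on Y. -/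
/-- If `(I+ε)Y = (I-ε)Y = 2Y = Y` and `φ₁, φ₂` satisfy the Heyde
functional equation, then `Δ_h³ φ₁ = 0` for all `h`, i.e. `φ₁` is a polynomial of
degree at most `2` on `Y`. -/
theorem heyde_polynomial_of_degree_two {Y : Type*} [AddCommGroup Y]
    (ε : Y ≃+ Y)
    (hplus : ∀ y : Y, ∃ k : Y, k + ε k = y)
    (hminus : ∀ y : Y, ∃ k : Y, k - ε k = y)
    (hdouble : ∀ y : Y, ∃ k : Y, 2 • k = y)
    (φ₁ φ₂ : Y → ℝ)
    (heq : ∀ u v : Y, φ₁ (u + v) + φ₂ (u + ε v) - φ₁ (u - v) - φ₂ (u - ε v) = 0) :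
    ∀ h y : Y, finDiff h (finDiff h (finDiff h φ₁)) y = 0 := by
  intro h y
  obtain ⟨k₁, hk₁⟩ := hdouble h
  obtain ⟨k₂, hk₂⟩ := hplus h
  obtain ⟨k₃, hk₃⟩ := hminus h
  rw [two_smul] at hk₁
  -- Step 1: difference in direction (ε k₂, k₂) kills the φ₂ (u - ε v) terms.
  have H1 : ∀ u v : Y,
      (φ₁ (u + v + (k₂ + ε k₂)) - φ₁ (u + v))
      - (φ₁ (u - v + (ε k₂ - k₂)) - φ₁ (u - v))
      + (φ₂ (u + ε v + (ε k₂ + ε k₂)) - φ₂ (u + ε v)) = 0 := by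
    intro u v
    have A := heq (u + ε k₂) (v + k₂)
    have B := heq u v
    simp only [map_add] at A
    rw [show u + ε k₂ + (v + k₂) = u + v + (k₂ + ε k₂) by abel,
        show u + ε k₂ + (ε v + ε k₂) = u + ε v + (ε k₂ + ε k₂) by abel,
        show u + ε k₂ - (v + k₂) = u - v + (ε k₂ - k₂) by abel,
        show u + ε k₂ - (ε v + ε k₂) = u - ε v by abel] at A
    linarith
  -- Step 2: difference in direction (-ε k₃, k₃) kills the φ₂ (u + ε v) terms.
  have H2 : ∀ u v : Y,
      ((φ₁ (u + v + (k₃ - ε k₃) + (k₂ + ε k₂)) - φ₁ (u + v + (k₃ - ε k₃)))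
        - (φ₁ (u + v + (k₂ + ε k₂)) - φ₁ (u + v)))
      - ((φ₁ (u - v + (-k₃ - ε k₃) + (ε k₂ - k₂)) - φ₁ (u - v + (-k₃ - ε k₃)))
        - (φ₁ (u - v + (ε k₂ - k₂)) - φ₁ (u - v))) = 0 := by
    intro u v
    have A := H1 (u - ε k₃) (v + k₃)
    have B := H1 u v
    simp only [map_add] at A
    rw [show u - ε k₃ + (v + k₃) = u + v + (k₃ - ε k₃) by abel,
        show u - ε k₃ + (ε v + ε k₃) = u + ε v by abel,
        show u - ε k₃ - (v + k₃) = u - v + (-k₃ - ε k₃) by abel] at A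
    linarith
  -- Step 3: difference in direction (k₁, k₁) kills the φ₁ (u - v) terms.
  have H3 : ∀ u v : Y,
      (((φ₁ (u + v + (k₁ + k₁) + (k₃ - ε k₃) + (k₂ + ε k₂))
          - φ₁ (u + v + (k₁ + k₁) + (k₃ - ε k₃)))
        - (φ₁ (u + v + (k₁ + k₁) + (k₂ + ε k₂)) - φ₁ (u + v + (k₁ + k₁))))
      - ((φ₁ (u + v + (k₃ - ε k₃) + (k₂ + ε k₂)) - φ₁ (u + v + (k₃ - ε k₃)))
        - (φ₁ (u + v + (k₂ + ε k₂)) - φ₁ (u + v)))) = 0 := by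
    intro u v
    have A := H2 (u + k₁) (v + k₁)
    have B := H2 u v
    rw [show u + k₁ + (v + k₁) = u + v + (k₁ + k₁) by abel,
        show u + k₁ - (v + k₁) = u - v by abel] at A
    linarith
  have A := H3 y 0
  rw [hk₁, hk₂, hk₃, add_zero] at A
  simp only [finDiff]
  rw [show y + h + h + h = y + h + h + h by rfl]
  linarith [A]
end

section
/- Let H be a compact abelian group which is the dual of a discrete torsion abelian group G. Then H is totally disconnected, and every neighborhood of zero in H contains an open compact subgroup. -/
/-!
Every value `χ g` is an `n`-th root of unity, `n` being the order of `g`, so each evaluation map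
takes only finitely many values and its fibres are clopen. Characters differing at `g` are then
separated by a clopen fibre of the evaluation at `g`, and a neighbourhood of the trivial
character contains the annihilator of a finite set `F ⊆ G`, a finite intersection of such
fibres, hence an open compact subgroup.
-/

/-- The dual group of a discrete abelian group `G`: characters `G → ℂ`
(automatically continuous), topologized as a subspace of `G → ℂ` with the
topology of pointwise convergence (which is the compact-open topology since `G`
is discrete). -/
abbrev DiscreteDual (G : Type*) [AddCommGroup G] : Type _ :=
  {χ : G → ℂ // (∀ g, ‖χ g‖ = 1) ∧ ∀ a b : G, χ (a + b) = χ a * χ b}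

/-- The trivial character. -/
def trivialChar (G : Type*) [AddCommGroup G] : DiscreteDual G :=
  ⟨fun _ => 1, fun _ => by simp, fun _ _ => by ring⟩

theorem isClopen_preimage_singleton_of_finite_range {X Y : Type*} [TopologicalSpace X]
    [TopologicalSpace Y] [T1Space Y] {f : X → Y} (hf : Continuous f)
    (hrange : (Set.range f).Finite) (y : Y) : IsClopen (f ⁻¹' {y}) := by
  refine ⟨isClosed_singleton.preimage hf, ?_⟩
  have hfibre : f ⁻¹' {y} = f ⁻¹' (Set.range f \ {y})ᶜ := by
    ext x
    simp
  rw [hfibre]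
  exact ((hrange.subset Set.sdiff_subset).isClosed.isOpen_compl).preimage hf

namespace DiscreteDual

variable {G : Type*} [AddCommGroup G]

theorem apply_ne_zero (χ : DiscreteDual G) (g : G) : χ.1 g ≠ 0 := by
  intro h
  simpa [h] using χ.2.1 g

theorem apply_zero (χ : DiscreteDual G) : χ.1 0 = 1 :=
  (mul_eq_left₀ (apply_ne_zero χ 0)).1 (by rw [← χ.2.2, add_zero])

theorem apply_nsmul (χ : DiscreteDual G) (g : G) (n : ℕ) : χ.1 (n • g) = χ.1 g ^ n := by
  induction n with
  | zero => simpa using apply_zero χ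
  | succ n ih => rw [succ_nsmul, χ.2.2, ih, pow_succ]

theorem apply_pow_addOrderOf (χ : DiscreteDual G) (g : G) : χ.1 g ^ addOrderOf g = 1 := by
  rw [← apply_nsmul, addOrderOf_nsmul_eq_zero, apply_zero]

theorem continuous_eval (g : G) : Continuous fun χ : DiscreteDual G => χ.1 g :=
  (continuous_apply g).comp continuous_subtype_val

theorem finite_range_eval {g : G} (hg : IsOfFinAddOrder g) :
    (Set.range fun χ : DiscreteDual G => χ.1 g).Finite := by
  refine (Polynomial.nthRootsFinset (addOrderOf g) (1 : ℂ)).finite_toSet.subset ?_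
  rintro _ ⟨χ, rfl⟩
  exact (Polynomial.mem_nthRootsFinset hg.addOrderOf_pos 1).2 (apply_pow_addOrderOf χ g)

theorem isClopen_setOf_apply_eq {g : G} (hg : IsOfFinAddOrder g) (w : ℂ) :
    IsClopen {χ : DiscreteDual G | χ.1 g = w} :=
  isClopen_preimage_singleton_of_finite_range (continuous_eval g) (finite_range_eval hg) w

theorem isClosed_range_val : IsClosed (Set.range ((↑) : DiscreteDual G → G → ℂ)) := by
  simp only [Subtype.range_coe_subtype, Set.ofPred_and, Set.ofPred_forall]
  exact (isClosed_iInter fun g =>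
      isClosed_eq (continuous_norm.comp (continuous_apply g)) continuous_const).inter
    (isClosed_iInter fun a => isClosed_iInter fun b =>
      isClosed_eq (continuous_apply (a + b)) ((continuous_apply a).mul (continuous_apply b)))

instance : CompactSpace (DiscreteDual G) := by
  refine ⟨Topology.IsInducing.subtypeVal.isCompact_iff.2 ?_⟩
  rw [Set.image_univ]
  refine (isCompact_univ_pi fun _ : G => isCompact_sphere (0 : ℂ) 1).of_isClosed_subset
    isClosed_range_val ?_
  rintro _ ⟨χ, rfl⟩ g -
  simpa using χ.2.1 g

theorem totallySeparatedSpace (htor : ∀ g : G, IsOfFinAddOrder g) :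
    TotallySeparatedSpace (DiscreteDual G) := by
  refine totallySeparatedSpace_iff_exists_isClopen.2 fun χ ψ hne => ?_
  obtain ⟨g, hg⟩ : ∃ g, χ.1 g ≠ ψ.1 g := by
    by_contra! h
    exact hne (Subtype.ext (funext h))
  exact ⟨{ρ | ρ.1 g = χ.1 g}, isClopen_setOf_apply_eq (htor g) _, rfl, fun h => hg h.symm⟩

def annihilator (F : Finset G) : Set (DiscreteDual G) :=
  {χ | ∀ g ∈ F, χ.1 g = 1}

theorem annihilator_eq_biInter (F : Finset G) :
    annihilator F = ⋂ g ∈ F, {χ : DiscreteDual G | χ.1 g = 1} := by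
  ext χ
  simp [annihilator]

theorem isClopen_annihilator (htor : ∀ g : G, IsOfFinAddOrder g) (F : Finset G) :
    IsClopen (annihilator F) := by
  rw [annihilator_eq_biInter]
  exact isClopen_biInter_finset fun g _ => isClopen_setOf_apply_eq (htor g) 1

theorem exists_annihilator_subset {U : Set (DiscreteDual G)} (hU : U ∈ nhds (trivialChar G)) :
    ∃ F : Finset G, annihilator F ⊆ U := by
  rw [nhds_subtype_eq_comap, Filter.mem_comap, nhds_pi] at hU
  obtain ⟨t, ht, htU⟩ := hU
  obtain ⟨I, hI, s, hs, hIs⟩ := Filter.mem_pi.1 ht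
  refine ⟨hI.toFinset, fun χ hχ => htU (hIs fun g hg => ?_)⟩
  rw [hχ g (hI.mem_toFinset.2 hg)]
  exact mem_of_mem_nhds (hs g)

theorem trivialChar_mem_annihilator (F : Finset G) : trivialChar G ∈ annihilator F :=
  fun _ _ => rfl

theorem mem_annihilator_of_apply_eq_mul {F : Finset G} {χ ψ ρ : DiscreteDual G}
    (hχ : χ ∈ annihilator F) (hψ : ψ ∈ annihilator F) (hρ : ∀ g, ρ.1 g = χ.1 g * ψ.1 g) :
    ρ ∈ annihilator F := fun g hg => by
  rw [hρ g, hχ g hg, hψ g hg, mul_one]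

theorem mem_annihilator_of_apply_eq_inv {F : Finset G} {χ ρ : DiscreteDual G}
    (hχ : χ ∈ annihilator F) (hρ : ∀ g, ρ.1 g = (χ.1 g)⁻¹) : ρ ∈ annihilator F := fun g hg => by
  rw [hρ g, hχ g hg, inv_one]

end DiscreteDual

/-- The dual `H` of a discrete torsion abelian group `G` is totally
disconnected, and every neighborhood of zero of `H` contains an open compact
subgroup. -/
theorem discreteDual_of_torsion_totallyDisconnected_and_open_compact_subgroups
    (G : Type*) [AddCommGroup G] (htor : ∀ g : G, IsOfFinAddOrder g) :
    TotallyDisconnectedSpace (DiscreteDual G) ∧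
    ∀ U : Set (DiscreteDual G), U ∈ nhds (trivialChar G) →
      ∃ V ⊆ U, IsOpen V ∧ IsCompact V ∧
        trivialChar G ∈ V ∧
        (∀ χ ψ ρ : DiscreteDual G, χ ∈ V → ψ ∈ V →
          (∀ g, ρ.1 g = χ.1 g * ψ.1 g) → ρ ∈ V) ∧
        (∀ χ ρ : DiscreteDual G, χ ∈ V → (∀ g, ρ.1 g = (χ.1 g)⁻¹) → ρ ∈ V) := by
  have := DiscreteDual.totallySeparatedSpace htor
  refine ⟨inferInstance, fun U hU => ?_⟩
  obtain ⟨F, hFU⟩ := DiscreteDual.exists_annihilator_subset hU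
  have hF := DiscreteDual.isClopen_annihilator htor F
  exact ⟨DiscreteDual.annihilator F, hFU, hF.isOpen, hF.isClosed.isCompact,
    DiscreteDual.trivialChar_mem_annihilator F,
    fun _ _ _ => DiscreteDual.mem_annihilator_of_apply_eq_mul,
    fun _ _ => DiscreteDual.mem_annihilator_of_apply_eq_inv⟩
end

section
/- Let X = ℝⁿ × D where D is a countable discrete abelian group, and δ a topological automorphism of X with ker(I+δ) = {0}. Let δ̄ be the induced automorphism on the quotient X/(ℝⁿ × b_D), where b_D is the torsion subgroup of D. Then ker(I+δ̄) = {0}. -/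
/-!
Let `g = I + δ`, an injective continuous endomorphism of `X = ℝⁿ × D`. Since `ℝⁿ` is connected
and `D` is discrete, `g` maps `ℝⁿ × {0}` into itself, where it is a continuous, hence `ℝ`-linear,
injective endomorphism of `ℝⁿ`; so it maps `ℝⁿ × {0}` onto itself. If `m • (g x).2 = 0`, then
`m • g x = g (v, 0)` for some `v`, and injectivity gives `m • x = (v, 0)`, so `x.2` is torsion.
-/

open Function

theorem AddMonoidHom.eq_zero_of_continuous_of_discreteTopology {E D : Type*} [AddCommGroup E]
    [AddCommGroup D] [TopologicalSpace E] [PreconnectedSpace E] [TopologicalSpace D]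
    [DiscreteTopology D] (ψ : E →+ D) (hψ : Continuous ψ) : ψ = 0 :=
  ext fun _ => (PreconnectedSpace.constant ‹_› hψ).trans ψ.map_zero

theorem AddMonoidHom.surjective_of_injective_of_continuous {E : Type*} [AddCommGroup E]
    [Module ℝ E] [TopologicalSpace E] [ContinuousSMul ℝ E] [T2Space E] [FiniteDimensional ℝ E]
    (f : E →+ E) (hf : Continuous f) (hinj : Injective f) : Surjective f :=
  LinearMap.injective_iff_surjective (f := (f.toRealLinearMap hf : E →ₗ[ℝ] E)).mp hinj

section Prod

variable {E D : Type*} [AddCommGroup E] [AddCommGroup D]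

theorem snd_map_inl_eq_zero [TopologicalSpace E] [PreconnectedSpace E] [TopologicalSpace D]
    [DiscreteTopology D] (g : E × D →+ E × D) (hg : Continuous g) (v : E) : (g (v, 0)).2 = 0 := by
  have hψ : Continuous ((AddMonoidHom.snd E D).comp (g.comp (AddMonoidHom.inl E D))) :=
    continuous_snd.comp (hg.comp (continuous_id.prodMk continuous_const))
  exact DFunLike.congr_fun (AddMonoidHom.eq_zero_of_continuous_of_discreteTopology _ hψ) v

theorem exists_map_inl_eq_inl [Module ℝ E] [TopologicalSpace E] [ContinuousSMul ℝ E]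
    [T2Space E] [FiniteDimensional ℝ E] [PreconnectedSpace E] [TopologicalSpace D]
    [DiscreteTopology D] (g : E × D →+ E × D) (hg : Continuous g) (hinj : Injective g) (w : E) :
    ∃ v, g (v, 0) = (w, 0) := by
  set f := (AddMonoidHom.fst E D).comp (g.comp (AddMonoidHom.inl E D))
  have hgf : ∀ v, g (v, 0) = (f v, 0) := fun v => Prod.ext rfl (snd_map_inl_eq_zero g hg v)
  have hf_inj : Injective f := fun a b hab => by
    simpa using hinj (by rw [hgf, hgf, hab] : g (a, 0) = g (b, 0))
  obtain ⟨v, hv⟩ := f.surjective_of_injective_of_continuous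
    (continuous_fst.comp (hg.comp (continuous_id.prodMk continuous_const))) hf_inj w
  exact ⟨v, by rw [hgf, hv]⟩

theorem snd_mem_torsion_of_map_snd_mem_torsion (g : E × D →+ E × D) (hinj : Injective g)
    (hinl : ∀ w, ∃ v, g (v, 0) = (w, 0)) {x : E × D}
    (hx : (g x).2 ∈ AddCommGroup.torsion D) : x.2 ∈ AddCommGroup.torsion D := by
  obtain ⟨m, hm, hmx⟩ := isOfFinAddOrder_iff_nsmul_eq_zero.mp hx
  obtain ⟨v, hv⟩ := hinl (m • (g x).1)
  have hmx_eq : m • x = (v, 0) := hinj <| by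
    rw [map_nsmul, hv]
    exact Prod.ext rfl hmx
  exact isOfFinAddOrder_iff_nsmul_eq_zero.mpr ⟨m, hm, congrArg Prod.snd hmx_eq⟩

end Prod

theorem induced_automorphism_ker_eq_bot_general {n : ℕ} {D : Type*} [AddCommGroup D]
    [TopologicalSpace D] [DiscreteTopology D]
    (δ : ((Fin n → ℝ) × D) ≃+ ((Fin n → ℝ) × D))
    (hδ : Continuous δ)
    (hker : ∀ x : (Fin n → ℝ) × D, x + δ x = 0 → x = 0) :
    ∀ x : (Fin n → ℝ) × D,
      x + δ x ∈ (⊤ : AddSubgroup (Fin n → ℝ)).prod (AddCommGroup.torsion D) →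
      x ∈ (⊤ : AddSubgroup (Fin n → ℝ)).prod (AddCommGroup.torsion D) := by
  intro x hx
  set g := AddMonoidHom.id _ + δ.toAddMonoidHom
  have hg_inj : Injective g := (injective_iff_map_eq_zero g).mpr hker
  have hg_cont : Continuous g := continuous_id.add hδ
  rw [AddSubgroup.mem_prod] at hx ⊢
  exact ⟨trivial, snd_mem_torsion_of_map_snd_mem_torsion g hg_inj
    (exists_map_inl_eq_inl g hg_cont hg_inj) hx.2⟩

/-- Let `X = ℝⁿ × D` with `D` countable discrete abelian, and `δ` a
topological automorphism of `X` with `ker (I + δ) = {0}`.  Then the automorphism `δ̄`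
induced on the quotient `X / (ℝⁿ × b_D)` (where `b_D` is the torsion subgroup of `D`)
satisfies `ker (I + δ̄) = {0}`; equivalently, `x + δ x ∈ ℝⁿ × b_D` implies
`x ∈ ℝⁿ × b_D`. -/
theorem induced_automorphism_ker_eq_bot {n : ℕ} {D : Type*} [AddCommGroup D]
    [Countable D] [TopologicalSpace D] [DiscreteTopology D]
    (δ : ((Fin n → ℝ) × D) ≃+ ((Fin n → ℝ) × D))
    (hδ : Continuous δ) (hδ' : Continuous δ.symm)
    (hker : ∀ x : (Fin n → ℝ) × D, x + δ x = 0 → x = 0) :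
    ∀ x : (Fin n → ℝ) × D,
      x + δ x ∈ (⊤ : AddSubgroup (Fin n → ℝ)).prod (AddCommGroup.torsion D) →
      x ∈ (⊤ : AddSubgroup (Fin n → ℝ)).prod (AddCommGroup.torsion D) :=
  induced_automorphism_ker_eq_bot_general δ hδ hker
end
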